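/- Let C be an arc of length L on a circle of radius R, and let L be a lattice. Then the number of lattice points on C satisfies #(C ∩ L) < 2 + L/(A_L R)^{1/3}. -/

import Mathlib

open Real

noncomputable def circlePt (O : EuclideanSpace ℝ (Fin 2)) (R θ : ℝ) :
    EuclideanSpace ℝ (Fin 2) :=
  (WithLp.equiv 2 (Fin 2 → ℝ)).symm ![O 0 + R * cos θ, O 1 + R * sin θ]

/-- The arc of length `L` on the circle of radius `R` centered at `O`,
starting at angle `θ₀`. -/
noncomputable def arcOf (O : EuclideanSpace ℝ (Fin 2)) (R θ₀ L : ℝ) :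
    Set (EuclideanSpace ℝ (Fin 2)) :=
  circlePt O R '' Set.Icc θ₀ (θ₀ + L / R)

def lat (v₀ v₁ v₂ : EuclideanSpace ℝ (Fin 2)) : Set (EuclideanSpace ℝ (Fin 2)) :=
  {P | ∃ m n : ℤ, P = v₀ + (m : ℝ) • v₁ + (n : ℝ) • v₂}

noncomputable def wedge (u v : EuclideanSpace ℝ (Fin 2)) : ℝ := u 0 * v 1 - u 1 * v 0

/-! Three distinct lattice points `P, Q, S` on the circle span a triangle whose doubled area
`|wedge (Q - P) (S - P)|` is a nonzero integer multiple of `A = |wedge v₁ v₂|`. At angles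
`x ≤ y ≤ z` this doubled area is `4 R² |sin ((y - x) / 2) sin ((z - y) / 2) sin ((z - x) / 2)|`,
at most `R² (z - x)³ / 8`; hence any three lattice points on the arc have angles spread by at
least `s = 2 (A R)^{1/3} / R`. If `N` angles in an interval of length `L / R` have this property,
stepping through every second one gives `(N - 2) s < 2 L / R`. -/

theorem Real.sin_add_sin_sub_sin_add (a b : ℝ) :
    sin a + sin b - sin (a + b) = 4 * sin (a / 2) * sin (b / 2) * sin ((a + b) / 2) := by
  obtain ⟨a, rfl⟩ : ∃ a', a = 2 * a' := ⟨a / 2, by ring⟩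
  obtain ⟨b, rfl⟩ : ∃ b', b = 2 * b' := ⟨b / 2, by ring⟩
  rw [show 2 * a + 2 * b = 2 * (a + b) by ring]
  simp only [mul_div_cancel_left₀ _ (two_ne_zero' ℝ), sin_two_mul, sin_add, cos_add]
  linear_combination
    (-2 * sin a * cos a) * sin_sq_add_cos_sq b - 2 * sin b * cos b * sin_sq_add_cos_sq a

theorem wedge_add_smul_add_smul (a b c d : ℝ) (u v : EuclideanSpace ℝ (Fin 2)) :
    wedge (a • u + b • v) (c • u + d • v) = (a * d - b * c) * wedge u v := by
  simp only [wedge, PiLp.add_apply, PiLp.smul_apply, smul_eq_mul]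
  ring

theorem wedge_circlePt_sub (O : EuclideanSpace ℝ (Fin 2)) (R x y z : ℝ) :
    wedge (circlePt O R y - circlePt O R x) (circlePt O R z - circlePt O R x) =
      4 * R ^ 2 * sin ((y - x) / 2) * sin ((z - y) / 2) * sin ((z - x) / 2) := by
  have key := Real.sin_add_sin_sub_sin_add (y - x) (z - y)
  rw [show y - x + (z - y) = z - x by ring] at key
  simp only [wedge, circlePt, PiLp.sub_apply, WithLp.equiv_symm_apply]
  simp only [Matrix.cons_val_zero, Matrix.cons_val_one, sin_sub] at key ⊢
  linear_combination R ^ 2 * key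

theorem wedge_ne_zero_of_linearIndependent {u v : EuclideanSpace ℝ (Fin 2)}
    (h : LinearIndependent ℝ ![u, v]) : wedge u v ≠ 0 := by
  intro hw
  have hw' : u 0 * v 1 - u 1 * v 0 = 0 := hw
  -- The coordinates of `v i • u - u i • v` are `0` and `± wedge u v`.
  have hcomb : ∀ i : Fin 2, v i • u + (-u i) • v = 0 := by
    intro i
    ext j
    fin_cases i <;> fin_cases j <;> simp <;> linarith
  have hu : u = 0 := by
    ext i
    simpa using (LinearIndependent.pair_iff.1 h _ _ (hcomb i)).2
  exact h.ne_zero 0 (by simpa using hu)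

theorem exists_sub_eq_of_mem_lat {v₀ v₁ v₂ P Q : EuclideanSpace ℝ (Fin 2)}
    (hP : P ∈ lat v₀ v₁ v₂) (hQ : Q ∈ lat v₀ v₁ v₂) :
    ∃ a b : ℤ, Q - P = (a : ℝ) • v₁ + (b : ℝ) • v₂ := by
  obtain ⟨m, n, rfl⟩ := hP
  obtain ⟨m', n', rfl⟩ := hQ
  exact ⟨m' - m, n' - n, by push_cast; module⟩

theorem abs_wedge_le_of_mem_lat {v₀ v₁ v₂ P Q S : EuclideanSpace ℝ (Fin 2)}
    (hP : P ∈ lat v₀ v₁ v₂) (hQ : Q ∈ lat v₀ v₁ v₂) (hS : S ∈ lat v₀ v₁ v₂)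
    (h : wedge (Q - P) (S - P) ≠ 0) : |wedge v₁ v₂| ≤ |wedge (Q - P) (S - P)| := by
  obtain ⟨a, b, hab⟩ := exists_sub_eq_of_mem_lat hP hQ
  obtain ⟨c, d, hcd⟩ := exists_sub_eq_of_mem_lat hP hS
  rw [hab, hcd, wedge_add_smul_add_smul] at h ⊢
  have hk : a * d - b * c ≠ 0 := by exact_mod_cast left_ne_zero_of_mul h
  have hk' : (1 : ℝ) ≤ |(a : ℝ) * d - b * c| := by exact_mod_cast Int.one_le_abs hk
  rw [abs_mul]
  exact le_mul_of_one_le_left (abs_nonneg _) hk'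

theorem circlePt_eq_of_sin_half_sub_eq_zero {O : EuclideanSpace ℝ (Fin 2)} {R x y : ℝ}
    (h : sin ((y - x) / 2) = 0) : circlePt O R x = circlePt O R y := by
  obtain ⟨n, hn⟩ := Real.sin_eq_zero_iff.1 h
  obtain rfl : y = x + n * (2 * π) := by linarith
  rw [circlePt, circlePt, cos_add_int_mul_two_pi, sin_add_int_mul_two_pi]

theorem abs_wedge_circlePt_sub_le (O : EuclideanSpace ℝ (Fin 2)) (R : ℝ) {x y z : ℝ}
    (hxy : x ≤ y) (hyz : y ≤ z) :
    |wedge (circlePt O R y - circlePt O R x) (circlePt O R z - circlePt O R x)| ≤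
      R ^ 2 * (z - x) ^ 3 / 8 := by
  have abs_sin_le {t : ℝ} (ht : 0 ≤ t) : |sin (t / 2)| ≤ t / 2 :=
    abs_sin_le_abs.trans_eq (abs_of_nonneg (by linarith))
  rw [wedge_circlePt_sub, abs_mul, abs_mul, abs_mul, abs_of_nonneg (by positivity : 0 ≤ 4 * R ^ 2)]
  calc 4 * R ^ 2 * |sin ((y - x) / 2)| * |sin ((z - y) / 2)| * |sin ((z - x) / 2)|
      ≤ 4 * R ^ 2 * ((y - x) / 2) * ((z - y) / 2) * ((z - x) / 2) := by
        gcongr <;> apply abs_sin_le <;> linarith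
    _ ≤ R ^ 2 * (z - x) ^ 3 / 8 := by
        nlinarith [mul_nonneg (mul_nonneg (sq_nonneg R) (sub_nonneg.2 (hxy.trans hyz)))
          (sq_nonneg (y - x - (z - y)))]

theorem eight_mul_abs_wedge_le_of_circlePt_mem_lat {O v₀ v₁ v₂ : EuclideanSpace ℝ (Fin 2)}
    {R x y z : ℝ} (hxy : x ≤ y) (hyz : y ≤ z)
    (hx : circlePt O R x ∈ lat v₀ v₁ v₂) (hy : circlePt O R y ∈ lat v₀ v₁ v₂)
    (hz : circlePt O R z ∈ lat v₀ v₁ v₂) (hne_xy : circlePt O R x ≠ circlePt O R y)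
    (hne_yz : circlePt O R y ≠ circlePt O R z) (hne_xz : circlePt O R x ≠ circlePt O R z) :
    8 * |wedge v₁ v₂| ≤ R ^ 2 * (z - x) ^ 3 := by
  have hR : R ≠ 0 := by
    rintro rfl
    exact hne_xy (by simp [circlePt])
  have hw : wedge (circlePt O R y - circlePt O R x) (circlePt O R z - circlePt O R x) ≠ 0 := by
    rw [wedge_circlePt_sub]
    have := mt circlePt_eq_of_sin_half_sub_eq_zero hne_xy
    have := mt circlePt_eq_of_sin_half_sub_eq_zero hne_yz
    have := mt circlePt_eq_of_sin_half_sub_eq_zero hne_xz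
    positivity
  linarith [abs_wedge_le_of_mem_lat hx hy hz hw, abs_wedge_circlePt_sub_le O R hxy hyz]

theorem two_mul_cbrt_div_le_sub_of_circlePt_mem_lat {O v₀ v₁ v₂ : EuclideanSpace ℝ (Fin 2)}
    {R x y z : ℝ} (hR : 0 < R) (hxy : x ≤ y) (hyz : y ≤ z)
    (hx : circlePt O R x ∈ lat v₀ v₁ v₂) (hy : circlePt O R y ∈ lat v₀ v₁ v₂)
    (hz : circlePt O R z ∈ lat v₀ v₁ v₂) (hne_xy : circlePt O R x ≠ circlePt O R y)
    (hne_yz : circlePt O R y ≠ circlePt O R z) (hne_xz : circlePt O R x ≠ circlePt O R z) :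
    2 * (|wedge v₁ v₂| * R) ^ ((1 : ℝ) / 3) / R ≤ z - x := by
  have h := eight_mul_abs_wedge_le_of_circlePt_mem_lat hxy hyz hx hy hz hne_xy hne_yz hne_xz
  have hcube : |wedge v₁ v₂| * R ≤ ((z - x) * R / 2) ^ (3 : ℝ) := by
    rw [Real.rpow_ofNat]
    nlinarith
  rw [div_le_iff₀ hR, one_div, ← le_div_iff₀' two_pos,
    Real.rpow_inv_le_iff_of_pos (by positivity) (by nlinarith) three_pos]
  exact hcube

theorem sub_one_mul_lt_of_add_two_gap {g : ℕ → ℝ} {s : ℝ} (hs : 0 < s) :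
    ∀ {n : ℕ}, StrictMonoOn g (Set.Iic n) → (∀ i, i + 2 ≤ n → s ≤ g (i + 2) - g i) →
      ((n : ℝ) - 1) * s < 2 * (g n - g 0)
  | 0, _, _ => by simp [hs]
  | 1, hg, _ => by
      have : g 0 < g 1 := hg (by simp) (by simp) zero_lt_one
      norm_num
      linarith
  | n + 2, hg, hgap => by
      have ih := sub_one_mul_lt_of_add_two_gap hs (n := n)
        (hg.mono (Set.Iic_subset_Iic.2 (by omega))) fun i hi => hgap i (by omega)
      have := hgap n le_rfl
      push_cast
      linarith

theorem Finset.card_sub_two_mul_lt_of_gap {T : Finset ℝ} {s lo hi : ℝ} (hs : 0 < s)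
    (hlohi : lo ≤ hi) (hT : ↑T ⊆ Set.Icc lo hi)
    (hgap : ∀ a ∈ T, ∀ b ∈ T, ∀ c ∈ T, a < b → b < c → s ≤ c - a) :
    ((T.card : ℝ) - 2) * s < 2 * (hi - lo) := by
  rcases T.card.eq_zero_or_pos with hT0 | hpos
  · rw [hT0, Nat.cast_zero]
    linarith
  obtain ⟨n, hn⟩ := Nat.exists_eq_add_one.2 hpos
  let e := T.orderEmbOfFin hn
  let g : ℕ → ℝ := fun i => if h : i < n + 1 then e ⟨i, h⟩ else 0
  have hg_apply {i : ℕ} (hi : i ≤ n) : g i = e ⟨i, Nat.lt_succ_of_le hi⟩ := dif_pos _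
  have hgT {i : ℕ} (hi : i ≤ n) : g i ∈ T := hg_apply hi ▸ T.orderEmbOfFin_mem hn _
  have hg : StrictMonoOn g (Set.Iic n) := fun i hi j hj hij => by
    rw [hg_apply hi, hg_apply hj]
    exact e.strictMono hij
  have key := sub_one_mul_lt_of_add_two_gap hs hg fun i hi =>
    hgap _ (hgT (i := i) (by omega)) _ (hgT (i := i + 1) (by omega)) _ (hgT hi)
      (hg (Set.mem_Iic.2 (by omega)) (Set.mem_Iic.2 (by omega)) (by omega))
      (hg (Set.mem_Iic.2 (by omega)) (Set.mem_Iic.2 (by omega)) (by omega))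
  have hhi := (hT (hgT le_rfl)).2
  have hlo := (hT (hgT n.zero_le)).1
  rw [hn]
  push_cast
  linarith

/-- #(C ∩ L) < 2 + L/(A_L R)^{1/3} for an arc of length L on a
circle of radius R. -/
theorem stmt_8 (O v₀ v₁ v₂ : EuclideanSpace ℝ (Fin 2))
    (hli : LinearIndependent ℝ ![v₁, v₂])
    (R L θ₀ : ℝ) (hR : 0 < R) (hL : 0 < L) :
    ((arcOf O R θ₀ L ∩ lat v₀ v₁ v₂).ncard : ℝ) <
      2 + L / (|wedge v₁ v₂| * R) ^ ((1 : ℝ) / 3) := by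
  classical
  have hB : 0 < (|wedge v₁ v₂| * R) ^ ((1 : ℝ) / 3) := by
    have := wedge_ne_zero_of_linearIndependent hli
    positivity
  set S := arcOf O R θ₀ L ∩ lat v₀ v₁ v₂
  rcases S.finite_or_infinite with hfin | hinf
  swap
  · rw [hinf.ncard, Nat.cast_zero]
    positivity
  obtain ⟨T, hTIcc, hTinj, hTS⟩ := Finset.exists_subset_injOn_image_eq_of_surjOn
    (Set.Icc θ₀ (θ₀ + L / R)) hfin.toFinset fun P hP => (hfin.mem_toFinset.1 hP).1
  have hcard : S.ncard = T.card := by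
    rw [Set.ncard_eq_toFinset_card _ hfin, ← hTS, Finset.card_image_of_injOn hTinj]
  have hmem {θ : ℝ} (hθ : θ ∈ T) : circlePt O R θ ∈ lat v₀ v₁ v₂ :=
    (hfin.mem_toFinset.1 (hTS ▸ Finset.mem_image_of_mem _ hθ)).2
  have hgap := Finset.card_sub_two_mul_lt_of_gap (by positivity)
    (le_add_of_nonneg_right (by positivity)) hTIcc fun a ha b hb c hc hab hbc =>
      two_mul_cbrt_div_le_sub_of_circlePt_mem_lat hR hab.le hbc.le (hmem ha) (hmem hb) (hmem hc)
        (hTinj.ne ha hb hab.ne) (hTinj.ne hb hc hbc.ne) (hTinj.ne ha hc (hab.trans hbc).ne)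
  rw [hcard, ← sub_lt_iff_lt_add', lt_div_iff₀ hB]
  field_simp at hgap
  linarith
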